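/- Let μ, n, α₂, h, N₃ be positive reals with μ < n, and set R_c = 1 − (μ−n)²/(4n·α₂(h+N₃n)). If R_c < R₀ < 1, then the quadratic n·w² + (μ−n)·w + α₂(h+N₃n)(1−R₀) = 0 has exactly two distinct positive real roots. -/

import Mathlib

/-!
Both roots `(-b ± √Δ) / 2a` of a real quadratic with `a > 0`, `b < 0`, `c > 0` and discriminant
`Δ > 0` are positive, because `√Δ < -b` exactly when `4ac > 0`. For the endemic quadratic,
`R₀ < 1` gives `c > 0`, and `R_c < R₀` is a rearrangement of `Δ > 0`.
-/

theorem exists_pos_roots_of_discrim_pos {a b c : ℝ} (ha : 0 < a) (hb : b < 0) (hc : 0 < c)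
    (hd : 0 < discrim a b c) :
    ∃ x y : ℝ, 0 < x ∧ 0 < y ∧ x ≠ y ∧
      ∀ w : ℝ, a * w ^ 2 + b * w + c = 0 ↔ w = x ∨ w = y := by
  set s := √(discrim a b c)
  have hs : discrim a b c = s * s := (Real.mul_self_sqrt hd.le).symm
  have hs_pos : 0 < s := Real.sqrt_pos.mpr hd
  have hs_lt : s < -b := by
    rw [mul_self_lt_mul_self_iff hs_pos.le (by linarith), ← hs, discrim]
    nlinarith
  refine ⟨(-b + s) / (2 * a), (-b - s) / (2 * a), div_pos (by linarith) (by positivity),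
    div_pos (by linarith) (by positivity), fun h ↦ ?_, fun w ↦ ?_⟩
  · rw [div_left_inj' (by positivity)] at h
    linarith
  · rw [sq, quadratic_eq_zero_iff ha.ne' hs]

theorem endemic_two_positive_roots_general
    (μ n α₂ h N₃ R₀ : ℝ)
    (hn : 0 < n) (hα₂ : 0 < α₂) (hh : 0 < h) (hN₃ : 0 < N₃)
    (hμn : μ < n)
    (hRc : 1 - (μ - n) ^ 2 / (4 * n * (α₂ * (h + N₃ * n))) < R₀)
    (hR1 : R₀ < 1) :
    ∃ w₁ w₂ : ℝ, 0 < w₁ ∧ 0 < w₂ ∧ w₁ ≠ w₂ ∧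
      n * w₁ ^ 2 + (μ - n) * w₁ + α₂ * (h + N₃ * n) * (1 - R₀) = 0 ∧
      n * w₂ ^ 2 + (μ - n) * w₂ + α₂ * (h + N₃ * n) * (1 - R₀) = 0 ∧
      ∀ w : ℝ, 0 < w →
        n * w ^ 2 + (μ - n) * w + α₂ * (h + N₃ * n) * (1 - R₀) = 0 →
        w = w₁ ∨ w = w₂ := by
  have hK : 0 < 4 * n * (α₂ * (h + N₃ * n)) := by positivity
  have hc : 0 < α₂ * (h + N₃ * n) * (1 - R₀) := by
    have : 0 < 1 - R₀ := by linarith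
    positivity
  have hd : 0 < discrim n (μ - n) (α₂ * (h + N₃ * n) * (1 - R₀)) := by
    have := (lt_div_iff₀ hK).mp (sub_lt_comm.mp hRc)
    rw [discrim]
    linarith
  obtain ⟨w₁, w₂, hw₁, hw₂, hne, hroots⟩ :=
    exists_pos_roots_of_discrim_pos hn (by linarith) hc hd
  exact ⟨w₁, w₂, hw₁, hw₂, hne, (hroots w₁).mpr (.inl rfl),
    (hroots w₂).mpr (.inr rfl), fun w _ hw ↦ (hroots w).mp hw⟩

/-- If μ < n and R_c < R₀ < 1, the endemic quadratic has exactly two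
distinct positive real roots. -/
theorem endemic_two_positive_roots
    (μ n α₂ h N₃ R₀ : ℝ)
    (hμ : 0 < μ) (hn : 0 < n) (hα₂ : 0 < α₂) (hh : 0 < h) (hN₃ : 0 < N₃)
    (hμn : μ < n)
    (hRc : 1 - (μ - n) ^ 2 / (4 * n * (α₂ * (h + N₃ * n))) < R₀)
    (hR1 : R₀ < 1) :
    ∃ w₁ w₂ : ℝ, 0 < w₁ ∧ 0 < w₂ ∧ w₁ ≠ w₂ ∧
      n * w₁ ^ 2 + (μ - n) * w₁ + α₂ * (h + N₃ * n) * (1 - R₀) = 0 ∧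
      n * w₂ ^ 2 + (μ - n) * w₂ + α₂ * (h + N₃ * n) * (1 - R₀) = 0 ∧
      ∀ w : ℝ, 0 < w →
        n * w ^ 2 + (μ - n) * w + α₂ * (h + N₃ * n) * (1 - R₀) = 0 →
        w = w₁ ∨ w = w₂ :=
  endemic_two_positive_roots_general μ n α₂ h N₃ R₀ hn hα₂ hh hN₃ hμn hRc hR1
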